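/- arXiv:2605.02988 — 2 statements merged into one kernel-verified Lean document; each statement's English description precedes it below -/
import Mathlib

section
/- With F defined on dyadic rationals as F(x) = (1/2)∑ₙ₌₁^{k-1} (-1)^(1-ωₙ) α^(n-1-q(n-1)) (1-α)^(q(n-1)) for x = (0.ω₁⋯ω_{k-1}1)₂, α = (1-i)/2: for x ∈ [1/2, 1) dyadic (so ω₁ = 1), F(x) = (1-α)F(2x-1) + 1/2. -/
open Complex

noncomputable def α : ℂ := (1 - I) / 2

def q (ω : ℕ → ℕ) (n : ℕ) : ℕ := ∑ k ∈ Finset.Icc 1 n, ω k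

/-- `F ω k` is the value associated to the dyadic point with binary expansion
`(0.ω₁⋯ω_{k-1}1)₂`. -/
noncomputable def F (ω : ℕ → ℕ) (k : ℕ) : ℂ :=
  (1 / 2 : ℂ) * ∑ n ∈ Finset.Ico 1 k,
    (-1 : ℂ) ^ (1 - ω n) * α ^ (n - 1 - q ω (n - 1)) * (1 - α) ^ (q ω (n - 1))

lemma q_shift (ω : ℕ → ℕ) (m : ℕ) :
    q ω (m + 1) = ω 1 + q (fun n => ω (n + 1)) m := by
  induction m with
  | zero => simp [q]
  | succ m ih =>
    have h1 : q ω (m + 1 + 1) = q ω (m + 1) + ω (m + 2) := by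
      rw [q, q, Finset.sum_Icc_succ_top (by omega : 1 ≤ m + 2)]
    have h2 : q (fun n => ω (n + 1)) (m + 1) = q (fun n => ω (n + 1)) m + ω (m + 2) := by
      rw [q, q, Finset.sum_Icc_succ_top (by omega : 1 ≤ m + 1)]
    omega

lemma q_le (ω : ℕ → ℕ) (hω : ∀ n, ω n ≤ 1) (n : ℕ) : q ω n ≤ n := by
  calc q ω n ≤ ∑ k ∈ Finset.Icc 1 n, 1 := Finset.sum_le_sum fun i _ => hω i
  _ = n := by simp

theorem F_right_half (ω : ℕ → ℕ) (hω : ∀ n, ω n ≤ 1) (k : ℕ) (hk : 2 ≤ k)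
    (hω1 : ω 1 = 1) (hωk : ω k = 1) :
    F ω k = (1 - α) * F (fun n => ω (n + 1)) (k - 1) + 1 / 2 := by
  obtain ⟨m, rfl⟩ : ∃ m, k = m + 2 := ⟨k - 2, by omega⟩
  set ω' := fun n => ω (n + 1) with hω'
  have hq : ∀ j, q ω (j + 1) = 1 + q ω' j := fun j => by rw [q_shift, hω1]
  have hqle : ∀ j, q ω' j ≤ j := fun j => q_le _ (fun n => hω (n + 1)) j
  rw [F, F, show m + 2 - 1 = m + 1 from rfl]
  rw [Finset.sum_eq_sum_Ico_succ_bot (by omega : 1 < m + 2)]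
  have h1 : (-1 : ℂ) ^ (1 - ω 1) * α ^ (1 - 1 - q ω (1 - 1)) * (1 - α) ^ (q ω (1 - 1)) = 1 := by
    simp [hω1, q]
  rw [h1]
  rw [Finset.sum_Ico_eq_sum_range, Finset.sum_Ico_eq_sum_range]
  rw [show m + 2 - (1 + 1) = m from rfl, show m + 1 - 1 = m from rfl]
  have key : ∀ j ∈ Finset.range m,
      (-1 : ℂ) ^ (1 - ω (1 + 1 + j)) * α ^ (1 + 1 + j - 1 - q ω (1 + 1 + j - 1)) *
        (1 - α) ^ (q ω (1 + 1 + j - 1)) =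
      (1 - α) * ((-1 : ℂ) ^ (1 - ω' (1 + j)) * α ^ (1 + j - 1 - q ω' (1 + j - 1)) *
        (1 - α) ^ (q ω' (1 + j - 1))) := by
    intro j _
    have e1 : 1 + 1 + j - 1 = j + 1 := by omega
    have e2 : 1 + j - 1 = j := by omega
    rw [e1, e2, hq j]
    have e3 : j + 1 - (1 + q ω' j) = j - q ω' j := by omega
    rw [e3]
    have e4 : ω' (1 + j) = ω (1 + 1 + j) := by show ω (1 + j + 1) = _; congr 1; omega
    rw [e4, pow_add, pow_one]
    ring
  rw [Finset.sum_congr rfl key, ← Finset.mul_sum]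
  ring
end

section
/- Full explicit formula: The unique continuous solution G : [0,1] → ℂ of G(x) = αG(2x) - 1/2 (0 ≤ x < 1/2), G(x) = (1-α)G(2x-1) + 1/2 (1/2 ≤ x ≤ 1), α = (1-i)/2, satisfies G(x) = (1/2)∑ₙ₌₁^∞ (-1)^(1-ωₙ(x)) α^(n-1-q(x,n-1)) (1-α)^(q(x,n-1)) for all x ∈ [0,1], where ωₙ(x) are the binary digits of x (choosing the terminating expansion when two exist, and all digits 1 for x = 1) and q(x,n) = ω₁(x)+⋯+ωₙ(x). -/
set_option maxHeartbeats 1000000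


open Complex

/-- The `n`-th binary digit of `x ∈ [0,1]` (for `n ≥ 1`), using the terminating
expansion for dyadic rationals, and all digits `1` for `x = 1`. -/
noncomputable def digit (x : ℝ) (n : ℕ) : ℕ :=
  if x = 1 then 1 else ⌊2 ^ n * x⌋₊ - 2 * ⌊2 ^ (n - 1) * x⌋₊

/-- Partial sums of the binary digits of `x`. -/
noncomputable def Q (x : ℝ) (n : ℕ) : ℕ := ∑ k ∈ Finset.Icc 1 n, digit x k

/-- The binary shift map. -/
noncomputable def T (x : ℝ) : ℝ := if x < 1/2 then 2*x else 2*x - 1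

lemma T_one : T 1 = 1 := by norm_num [T]

lemma T_mem {x : ℝ} (hx : x ∈ Set.Icc (0:ℝ) 1) : T x ∈ Set.Icc (0:ℝ) 1 := by
  obtain ⟨h0, h1⟩ := hx
  unfold T
  split <;> constructor <;> linarith

lemma T_mem' {x : ℝ} (hx : x ∈ Set.Ico (0:ℝ) 1) : T x ∈ Set.Ico (0:ℝ) 1 := by
  obtain ⟨h0, h1⟩ := hx
  unfold T
  split <;> constructor <;> linarith

lemma floor_two_mul_bounds {y : ℝ} (hy : 0 ≤ y) :
    2 * ⌊y⌋₊ ≤ ⌊2*y⌋₊ ∧ ⌊2*y⌋₊ ≤ 2 * ⌊y⌋₊ + 1 := by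
  constructor
  · have : ((2 * ⌊y⌋₊ : ℕ) : ℝ) ≤ 2*y := by
      push_cast
      have := Nat.floor_le hy
      linarith
    exact Nat.le_floor this
  · have h : ⌊2*y⌋₊ < 2*⌊y⌋₊ + 2 := by
      rw [Nat.floor_lt (by linarith)]
      push_cast
      linarith [Nat.lt_floor_add_one y]
    omega

lemma digit_le_one {x : ℝ} (hx : 0 ≤ x) {n : ℕ} (hn : 1 ≤ n) : digit x n ≤ 1 := by
  unfold digit
  split
  · exact le_refl 1
  · have h2 : (2:ℝ)^n * x = 2 * ((2:ℝ)^(n-1) * x) := by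
      rw [← mul_assoc]
      congr 1
      rw [← pow_succ']
      congr 1
      omega
    rw [h2]
    have hy : (0:ℝ) ≤ (2:ℝ)^(n-1) * x := by positivity
    have := floor_two_mul_bounds hy
    omega

lemma digit_one_lt {x : ℝ} (hx : x ∈ Set.Ico (0:ℝ) 1) :
    digit x 1 = if x < 1/2 then 0 else 1 := by
  obtain ⟨h0, h1⟩ := hx
  unfold digit
  rw [if_neg (by linarith)]
  have hfx : ⌊x⌋₊ = 0 := Nat.floor_eq_zero.2 h1
  simp only [pow_one, Nat.sub_self, pow_zero, one_mul, hfx, Nat.mul_zero, Nat.sub_zero]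
  split
  · exact Nat.floor_eq_zero.2 (by linarith)
  · rw [Nat.floor_eq_iff (by linarith)]
    constructor
    · push_cast; linarith
    · push_cast; linarith

lemma digit_shift {x : ℝ} (hx : x ∈ Set.Icc (0:ℝ) 1) {n : ℕ} (hn : 1 ≤ n) :
    digit (T x) n = digit x (n + 1) := by
  rcases eq_or_lt_of_le hx.2 with h1 | h1
  · subst h1
    rw [T_one]
    simp [digit]
  · have hx' : x ∈ Set.Ico (0:ℝ) 1 := ⟨hx.1, h1⟩
    have hTx : T x ∈ Set.Ico (0:ℝ) 1 := T_mem' hx'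
    have hTne : T x ≠ 1 := ne_of_lt hTx.2
    have hxne : x ≠ 1 := ne_of_lt h1
    unfold digit
    rw [if_neg hTne, if_neg hxne]
    have hpow : (2:ℝ)^n = 2 * (2:ℝ)^(n-1) := by
      rw [← pow_succ']
      congr 1
      omega
    have hpow2 : (2:ℝ)^(n+1) = 2 * (2:ℝ)^n := by rw [← pow_succ']
    have hn1 : n + 1 - 1 = n := by omega
    rw [hn1]
    -- abbreviations
    have hx0 : (0:ℝ) ≤ x := hx.1
    have hA : (0:ℝ) ≤ (2:ℝ)^n * x := mul_nonneg (by positivity) hx0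
    unfold T
    split_ifs with hsplit
    · -- x < 1/2 : T x = 2x
      have e1 : (2:ℝ)^n * (2*x) = (2:ℝ)^(n+1) * x := by rw [hpow2]; ring
      have e2 : (2:ℝ)^(n-1) * (2*x) = (2:ℝ)^n * x := by rw [hpow]; ring
      rw [e1, e2]
    · -- 1/2 ≤ x : T x = 2x - 1
      push_neg at hsplit
      have e1 : (2:ℝ)^n * (2*x - 1) = (2:ℝ)^(n+1) * x - (2^n : ℕ) := by
        push_cast; rw [hpow2]; ring
      have e2 : (2:ℝ)^(n-1) * (2*x - 1) = (2:ℝ)^n * x - (2^(n-1) : ℕ) := by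
        push_cast; rw [hpow]; ring
      rw [e1, e2, Nat.floor_sub_natCast, Nat.floor_sub_natCast]
      have hge1 : (2:ℕ)^n ≤ ⌊(2:ℝ)^(n+1) * x⌋₊ := by
        apply Nat.le_floor
        push_cast
        rw [hpow2]
        nlinarith [pow_pos (by norm_num : (0:ℝ) < 2) n]
      have hge2 : (2:ℕ)^(n-1) ≤ ⌊(2:ℝ)^n * x⌋₊ := by
        apply Nat.le_floor
        push_cast
        rw [hpow]
        nlinarith [pow_pos (by norm_num : (0:ℝ) < 2) (n-1)]
      have hab : (2:ℕ)^n = 2 * 2^(n-1) := by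
        rw [← pow_succ']
        congr 1
        omega
      have hbounds : 2 * ⌊(2:ℝ)^n * x⌋₊ ≤ ⌊(2:ℝ)^(n+1) * x⌋₊ ∧
          ⌊(2:ℝ)^(n+1) * x⌋₊ ≤ 2 * ⌊(2:ℝ)^n * x⌋₊ + 1 := by
        have e3 : (2:ℝ)^(n+1) * x = 2 * ((2:ℝ)^n * x) := by rw [hpow2]; ring
        rw [e3]
        exact floor_two_mul_bounds hA
      omega

lemma digit_iter {x : ℝ} (hx : x ∈ Set.Icc (0:ℝ) 1) (N : ℕ) {k : ℕ} (hk : 1 ≤ k) :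
    digit (T^[N] x) k = digit x (N + k) := by
  induction N generalizing x with
  | zero => simp
  | succ n ih =>
    rw [Function.iterate_succ_apply]
    rw [ih (T_mem hx)]
    have : digit (T x) (n + k) = digit x (n + k + 1) := digit_shift hx (by omega)
    rw [this]
    congr 1
    omega

lemma iter_mem {x : ℝ} (hx : x ∈ Set.Icc (0:ℝ) 1) (N : ℕ) :
    T^[N] x ∈ Set.Icc (0:ℝ) 1 := by
  induction N with
  | zero => simpa
  | succ n ih => rw [Function.iterate_succ_apply']; exact T_mem ih

lemma Q_le {x : ℝ} (hx : 0 ≤ x) (n : ℕ) : Q x n ≤ n := by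
  unfold Q
  calc ∑ k ∈ Finset.Icc 1 n, digit x k ≤ ∑ k ∈ Finset.Icc 1 n, 1 := by
        apply Finset.sum_le_sum
        intro i hi
        exact digit_le_one hx (Finset.mem_Icc.1 hi).1
    _ = n := by simp

lemma Q_succ (x : ℝ) (n : ℕ) : Q x (n + 1) = Q x n + digit x (n + 1) := by
  unfold Q
  rw [Finset.sum_Icc_succ_top (by omega)]

theorem G_explicit_formula (G : ℝ → ℂ)
    (hcont : ContinuousOn G (Set.Icc 0 1))
    (h0 : ∀ x : ℝ, 0 ≤ x → x < 1 / 2 → G x = α * G (2 * x) - 1 / 2)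
    (h1 : ∀ x : ℝ, 1 / 2 ≤ x → x ≤ 1 → G x = (1 - α) * G (2 * x - 1) + 1 / 2) :
    ∀ x ∈ Set.Icc (0 : ℝ) 1,
      G x = (1 / 2 : ℂ) * ∑' n : ℕ,
        (-1 : ℂ) ^ (1 - digit x (n + 1)) * α ^ (n - Q x n) * (1 - α) ^ (Q x n) := by
  -- one-step recursion
  have step : ∀ y ∈ Set.Icc (0:ℝ) 1,
      G y = (1/2 : ℂ) * (-1) ^ (1 - digit y 1) +
        α ^ (1 - digit y 1) * (1 - α) ^ (digit y 1) * G (T y) := by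
    intro y hy
    rcases eq_or_lt_of_le hy.2 with he | hlt
    · subst he
      have hd : digit 1 1 = 1 := by simp [digit]
      rw [hd, T_one]
      have h := h1 1 (by norm_num) le_rfl
      norm_num at h
      simp only [Nat.sub_self, pow_zero, pow_one, one_mul, mul_one]
      linear_combination h
    · have hy' : y ∈ Set.Ico (0:ℝ) 1 := ⟨hy.1, hlt⟩
      rw [digit_one_lt hy']
      unfold T
      by_cases hc : y < 1/2
      · simp only [if_pos hc, Nat.sub_zero, pow_one, pow_zero, mul_one]
        linear_combination h0 y hy.1 hc
      · simp only [if_neg hc, Nat.sub_self, pow_zero, pow_one, one_mul, mul_one]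
        push_neg at hc
        linear_combination h1 y hc hy.2
  intro x hx
  set f : ℕ → ℂ := fun n =>
    (1/2 : ℂ) * ((-1 : ℂ) ^ (1 - digit x (n + 1)) * α ^ (n - Q x n) * (1 - α) ^ (Q x n))
    with hf
  -- iterated formula
  have iter : ∀ N : ℕ, G x = (∑ n ∈ Finset.range N, f n) +
      α ^ (N - Q x N) * (1 - α) ^ (Q x N) * G (T^[N] x) := by
    intro N
    induction N with
    | zero => simp [Q]
    | succ N ih =>
      have hy := iter_mem hx N
      have hstep := step _ hy
      have hd : digit (T^[N] x) 1 = digit x (N + 1) := digit_iter hx N le_rfl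
      rw [hd] at hstep
      rw [ih, hstep]
      rw [Function.iterate_succ_apply']
      have hQs := Q_succ x N
      have hdle : digit x (N + 1) ≤ 1 := digit_le_one hx.1 (by omega)
      have hQle : Q x N ≤ N := Q_le hx.1 N
      have e1 : N + 1 - Q x (N+1) = (N - Q x N) + (1 - digit x (N+1)) := by omega
      have e2 : Q x (N+1) = Q x N + digit x (N+1) := hQs
      rw [Finset.sum_range_succ]
      rw [e1, e2, pow_add, pow_add]
      simp only [hf]
      ring
  -- norms
  have habs : ‖α‖ ^ 2 = 1/2 := by
    rw [Complex.sq_norm]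
    simp [α, Complex.normSq_apply]
    norm_num
  have habs2 : ‖1 - α‖ ^ 2 = 1/2 := by
    rw [Complex.sq_norm]
    have : (1 : ℂ) - α = (1 + I)/2 := by rw [α]; ring
    rw [this]
    simp [Complex.normSq_apply]
    norm_num
  have hαle : ‖α‖ ≤ 3/4 := by
    nlinarith [habs, norm_nonneg α]
  have h1αle : ‖1 - α‖ ≤ 3/4 := by
    nlinarith [habs2, norm_nonneg (1 - α)]
  have hBnorm : ∀ N : ℕ, ‖α ^ (N - Q x N) * (1 - α) ^ (Q x N)‖ ≤ (3/4 : ℝ)^N := by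
    intro N
    have hQle : Q x N ≤ N := Q_le hx.1 N
    rw [norm_mul, norm_pow, norm_pow]
    calc ‖α‖ ^ (N - Q x N) * ‖1 - α‖ ^ Q x N
        ≤ (3/4 : ℝ) ^ (N - Q x N) * (3/4 : ℝ) ^ Q x N := by
          apply mul_le_mul
          · exact pow_le_pow_left₀ (norm_nonneg _) hαle _
          · exact pow_le_pow_left₀ (norm_nonneg _) h1αle _
          · positivity
          · positivity
      _ = (3/4 : ℝ) ^ N := by rw [← pow_add]; congr 1; omega
  -- bound on G
  obtain ⟨C, hC⟩ := (isCompact_Icc : IsCompact (Set.Icc (0:ℝ) 1)).exists_bound_of_continuousOn hcont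
  have hC0 : 0 ≤ C := le_trans (norm_nonneg _) (hC 0 (by norm_num))
  -- tail tends to zero
  have htail : Filter.Tendsto
      (fun N => α ^ (N - Q x N) * (1 - α) ^ (Q x N) * G (T^[N] x))
      Filter.atTop (nhds 0) := by
    rw [tendsto_zero_iff_norm_tendsto_zero]
    apply squeeze_zero (fun N => norm_nonneg _) (g := fun N => C * (3/4:ℝ)^N)
    · intro N
      rw [norm_mul]
      calc ‖α ^ (N - Q x N) * (1 - α) ^ (Q x N)‖ * ‖G (T^[N] x)‖
          ≤ (3/4:ℝ)^N * C := by
            apply mul_le_mul (hBnorm N) (hC _ (iter_mem hx N)) (norm_nonneg _)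
            positivity
        _ = C * (3/4:ℝ)^N := by ring
    · have := tendsto_pow_atTop_nhds_zero_of_lt_one (by norm_num : (0:ℝ) ≤ 3/4)
        (by norm_num : (3/4:ℝ) < 1)
      simpa using this.const_mul C
  -- summability
  have hsum : Summable f := by
    apply Summable.of_norm
    have hgeo : Summable (fun n : ℕ => (1/2 : ℝ) * (3/4:ℝ)^n) :=
      (summable_geometric_of_lt_one (by norm_num) (by norm_num)).mul_left _
    refine Summable.of_nonneg_of_le (fun n => norm_nonneg _) ?_ hgeo
    · intro n
      rw [hf]
      simp only [norm_mul]
      have h1 : ‖(1/2 : ℂ)‖ = 1/2 := by norm_num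
      have h2 : ‖(-1 : ℂ) ^ (1 - digit x (n + 1))‖ = 1 := by
        rw [norm_pow, norm_neg, norm_one, one_pow]
      calc ‖(1/2 : ℂ)‖ * (‖(-1 : ℂ) ^ (1 - digit x (n + 1))‖ *
            ‖α ^ (n - Q x n)‖ * ‖(1 - α) ^ (Q x n)‖)
          = (1/2) * ‖α ^ (n - Q x n) * (1 - α) ^ (Q x n)‖ := by
            rw [h1, h2, norm_mul]; ring
        _ ≤ (1/2) * (3/4:ℝ)^n := by
            have := hBnorm n
            linarith [hBnorm n]
  -- partial sums tend to G x
  have hps : Filter.Tendsto (fun N => ∑ n ∈ Finset.range N, f n)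
      Filter.atTop (nhds (G x)) := by
    have : (fun N => ∑ n ∈ Finset.range N, f n) =
        fun N => G x - α ^ (N - Q x N) * (1 - α) ^ (Q x N) * G (T^[N] x) := by
      funext N
      have := iter N
      linear_combination -this
    rw [this]
    simpa using (tendsto_const_nhds (x := G x)).sub htail
  have hhs : HasSum f (G x) := (hsum.hasSum_iff_tendsto_nat).2 hps
  rw [← hhs.tsum_eq, hf]
  rw [tsum_mul_left]
end
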